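/- arXiv:1808.00678 — 2 statements merged into one kernel-verified Lean document; each statement's English description precedes it below -/
import Mathlib

section
/- In the group G = ⟨x, y, t | x^t = x^p, y^{t^{-1}} = y^p, [x,y] = 1, [[x, y^{j t^i}], x] = 1 (i,j ∈ ℤ)⟩, for every i ≥ 0 the relation [x, y^{t^i}]^{p^i} = 1 holds. -/
/-- The commutator `[a,b] = a⁻¹b⁻¹ab`. -/
def br {G : Type*} [Group G] (a b : G) : G := a⁻¹ * b⁻¹ * a * b

/-- Conjugation `a^b = b⁻¹ab`. -/
def cnj {G : Type*} [Group G] (a b : G) : G := b⁻¹ * a * b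

namespace MikhailovGroup

/-- The generator `x` of the free group on three letters. -/
def X : FreeGroup (Fin 3) := FreeGroup.of 0

/-- The generator `y` of the free group on three letters. -/
def Y : FreeGroup (Fin 3) := FreeGroup.of 1

/-- The generator `t` of the free group on three letters. -/
def T : FreeGroup (Fin 3) := FreeGroup.of 2

/-- The relations `x^t = x^p`, `y^{t⁻¹} = y^p`, `[x,y] = 1`, and
`[[x, y^{j t^i}], x] = 1` for all `i, j ∈ ℤ`. -/
def rels (p : ℕ) : Set (FreeGroup (Fin 3)) :=
  {cnj X T * (X ^ p)⁻¹, cnj Y T⁻¹ * (Y ^ p)⁻¹, br X Y} ∪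
    ⋃ (i : ℤ) (j : ℤ), {br (br X (cnj (Y ^ j) (T ^ i))) X}

/-- The group `G = ⟨x, y, t | x^t = x^p, y^{t⁻¹} = y^p, [x,y] = 1,
[[x, y^{j t^i}], x] = 1 (i,j ∈ ℤ)⟩`. -/
def G (p : ℕ) : Type := PresentedGroup (rels p)

instance (p : ℕ) : Group (G p) := by unfold G; infer_instance

/-- The image of the generator `x` in `G`. -/
def x (p : ℕ) : G p := PresentedGroup.of 0

/-- The image of the generator `y` in `G`. -/
def y (p : ℕ) : G p := PresentedGroup.of 1

/-- The image of the generator `t` in `G`. -/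
def t (p : ℕ) : G p := PresentedGroup.of 2

/-- The normal closure `H = ⟨x, y⟩^G`. -/
def H (p : ℕ) : Subgroup (G p) := Subgroup.normalClosure {x p, y p}

end MikhailovGroup

/-! Write `c n = [x, y^{t^n}]`. Conjugation by `t` sends `c n` to `[x^p, y^{t^{n+1}}]`, and since `x`
commutes with `c (n+1)` this is `c (n+1) ^ p`. Hence `c (n+1) ^ p^(n+1)` is the `t`-conjugate of
`c n ^ p^n`, and induction from `c 0 = [x, y] = 1` gives the claim. -/

section Commutator

variable {M N : Type*} [Group M] [Group N]

lemma cnj_eq_conj (a g : M) : cnj a g = MulAut.conj g⁻¹ a := by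
  simp [cnj, mul_assoc]

lemma map_cnj (f : M →* N) (a g : M) : f (cnj a g) = cnj (f a) (f g) := by
  simp only [cnj, map_mul, map_inv]

lemma map_br (f : M →* N) (a b : M) : f (br a b) = br (f a) (f b) := by
  simp only [br, map_mul, map_inv]

lemma cnj_pow (a g : M) (n : ℕ) : cnj (a ^ n) g = cnj a g ^ n := by
  simp only [cnj_eq_conj, map_pow]

lemma cnj_br (a b g : M) : cnj (br a b) g = br (cnj a g) (cnj b g) := by
  simp only [cnj_eq_conj]
  exact map_br (MulAut.conj g⁻¹).toMonoidHom a b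

lemma cnj_cnj (a g h : M) : cnj (cnj a g) h = cnj a (g * h) := by
  simp only [cnj, mul_inv_rev, mul_assoc]

lemma cnj_eq_mul_br (a b : M) : cnj a b = a * br a b := by
  simp only [cnj, br, mul_assoc, mul_inv_cancel_left]

lemma br_eq_one_iff_commute {a b : M} : br a b = 1 ↔ Commute a b := by
  simp only [br, commute_iff_eq, mul_assoc, inv_mul_eq_one, eq_inv_mul_iff_mul_eq]
  exact eq_comm

lemma br_pow_left_of_commute {a b : M} (h : Commute a (br a b)) (n : ℕ) :
    br (a ^ n) b = br a b ^ n := by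
  calc br (a ^ n) b = (a ^ n)⁻¹ * cnj (a ^ n) b := by simp [cnj_eq_mul_br]
    _ = (a ^ n)⁻¹ * (a * br a b) ^ n := by rw [cnj_pow, cnj_eq_mul_br]
    _ = br a b ^ n := by rw [h.mul_pow, inv_mul_cancel_left]

end Commutator

namespace MikhailovGroup

variable (p : ℕ)

lemma mk_X : PresentedGroup.mk (rels p) X = x p := rfl
lemma mk_Y : PresentedGroup.mk (rels p) Y = y p := rfl
lemma mk_T : PresentedGroup.mk (rels p) T = t p := rfl

lemma cnj_x_t : cnj (x p) (t p) = x p ^ p := by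
  have h := PresentedGroup.mk_eq_mk_of_mul_inv_mem (rels := rels p) (x := cnj X T) (y := X ^ p)
    (Set.mem_union_left _ (Set.mem_insert _ _))
  rwa [map_cnj, map_pow, mk_X, mk_T] at h

lemma br_x_y : br (x p) (y p) = 1 := by
  have h := PresentedGroup.one_of_mem (rels := rels p) (x := br X Y)
    (Set.mem_union_left _ (Or.inr (Or.inr rfl)))
  rwa [map_br, mk_X, mk_Y] at h

lemma br_br_x_cnj_y_x (i j : ℤ) : br (br (x p) (cnj (y p ^ j) (t p ^ i))) (x p) = 1 := by
  have h := PresentedGroup.one_of_mem (rels := rels p)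
    (Set.mem_union_right _ (Set.mem_iUnion₂_of_mem (i := i) (j := j) (Set.mem_singleton _)))
  rwa [map_br, map_br, map_cnj, map_zpow, map_zpow, mk_X, mk_Y, mk_T] at h

def c (n : ℕ) : G p := br (x p) (cnj (y p) (t p ^ n))

lemma c_zero : c p 0 = 1 := by
  simpa [c, cnj] using br_x_y p

lemma commute_x_c (n : ℕ) : Commute (x p) (c p n) := by
  have h := br_br_x_cnj_y_x p n 1
  rw [zpow_one, zpow_natCast, br_eq_one_iff_commute] at h
  exact h.symm

lemma cnj_c_t (n : ℕ) : cnj (c p n) (t p) = c p (n + 1) ^ p := by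
  rw [c, cnj_br, cnj_x_t, cnj_cnj, ← pow_succ, br_pow_left_of_commute (commute_x_c p (n + 1))]
  rfl

lemma c_pow_pow_eq_one (n : ℕ) : c p n ^ p ^ n = 1 := by
  induction n with
  | zero => rw [c_zero, one_pow]
  | succ n ih =>
    calc c p (n + 1) ^ p ^ (n + 1) = cnj (c p n ^ p ^ n) (t p) := by
          rw [cnj_pow, cnj_c_t, ← pow_mul, pow_succ']
      _ = 1 := by simp [ih, cnj]

end MikhailovGroup

open MikhailovGroup in
theorem mikhailov_commutator_power_trivial_general (p : ℕ) :
    ∀ i : ℕ, br (x p) (cnj (y p) (t p ^ i)) ^ p ^ i = 1 :=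
  c_pow_pow_eq_one p

open MikhailovGroup in
/-- in `G`, for every `i ≥ 0` the relation `[x, y^{t^i}]^{p^i} = 1` holds. -/
theorem mikhailov_commutator_power_trivial (p : ℕ) (hp : p.Prime) :
    ∀ i : ℕ, br (x p) (cnj (y p) (t p ^ i)) ^ p ^ i = 1 :=
  mikhailov_commutator_power_trivial_general p
end

section
/- In the group G = ⟨x, y, t | x^t = x^p, y^{t^{-1}} = y^p, [x,y] = 1, [[x, y^{j t^i}], x] = 1 (i,j ∈ ℤ)⟩, every element of the second derived subgroup [H,H] of the normal closure H of {x,y} has order a power of p. -/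
/-!
Write `x_a = x^{t^{-a}}` and `y_b = y^{t^b}` for `a, b ∈ ℤ`. The relations `x^t = x^p` and
`y^{t⁻¹} = y^p` give `x_{a+1}^p = x_a` and `y_{b+1}^p = y_b`, so the `x_a` commute with each
other, as do the `y_b`, and conjugation by `t` shifts the indices; hence `H` lies in the normal
subgroup generated by all `x_a, y_b`. Conjugating `[[x, y^{j t^i}], x] = 1` by a power of `t`
says that `x_a` commutes with `x_a^{y_b^j}`; since every `x_a^{y_b^j}` is a `p`-power of one
with larger `a` and `b`, the subgroup `A` generated by all of them is abelian, and it is normal.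
Now `[x_a, y_b] ∈ A` commutes with `x_a`, so `[x_a, y_b]^{p^k} = [x_a^{p^k}, y_b] = 1` as soon as
`x_a^{p^k} = x_m` with `m ≤ -b` (then `x_m` is a power of `x_{-b} = x^{t^b}`, which commutes
with `y_b = y^{t^b}`). Thus the generators of `H` commute modulo the normal subgroup of `p`-power
torsion elements of `A`, which therefore contains `[H, H]`.
-/

open scoped commutatorElement

section GroupLemmas

variable {Γ : Type*} [Group Γ]

theorem br_eq_one_iff {a b : Γ} : br a b = 1 ↔ Commute a b := by
  rw [show br a b = ⁅a⁻¹, b⁻¹⁆ by simp [br, commutatorElement_def],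
    commutatorElement_eq_one_iff_commute, Commute.inv_inv_iff]

theorem map_conj_apply {Γ' F : Type*} [Group Γ'] [FunLike F Γ Γ'] [MonoidHomClass F Γ Γ']
    (f : F) (g h : Γ) : f (MulAut.conj g h) = MulAut.conj (f g) (f h) := by
  simp

theorem conj_zpow_conj (g h : Γ) (m n : ℤ) :
    MulAut.conj (g ^ m) (MulAut.conj (g ^ n) h) = MulAut.conj (g ^ (m + n)) h := by
  rw [zpow_add, map_mul, MulAut.mul_apply]

theorem commutatorElement_pow_left_of_commute {g h : Γ} (hc : Commute ⁅g, h⁆ g) (n : ℕ) :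
    ⁅g ^ n, h⁆ = ⁅g, h⁆ ^ n := by
  induction n with
  | zero => simp
  | succ n ih =>
    calc ⁅g ^ (n + 1), h⁆ = g * ⁅g ^ n, h⁆ * g⁻¹ * ⁅g, h⁆ := by
          simp only [commutatorElement_def]; group
      _ = ⁅g, h⁆ ^ (n + 1) := by rw [ih, (hc.pow_left n).symm.mul_inv_cancel, pow_succ]

theorem exists_pow_pow_eq_of_pow_succ_eq {p : ℕ} {u : ℤ → Γ}
    (hu : ∀ n, u (n + 1) ^ p = u n) {m n : ℤ} (hmn : m ≤ n) :
    ∃ k : ℕ, u n ^ p ^ k = u m := by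
  induction n, hmn using Int.leInduction with
  | base => exact ⟨0, by simp⟩
  | succ n _ ih =>
    obtain ⟨k, hk⟩ := ih
    exact ⟨k + 1, by rw [pow_succ', pow_mul, hu, hk]⟩

theorem commute_of_pow_succ_eq {p : ℕ} {u : ℤ → Γ} (hu : ∀ n, u (n + 1) ^ p = u n)
    (m n : ℤ) : Commute (u m) (u n) := by
  obtain ⟨k, hk⟩ := exists_pow_pow_eq_of_pow_succ_eq hu (le_max_left m n)
  obtain ⟨l, hl⟩ := exists_pow_pow_eq_of_pow_succ_eq hu (le_max_right m n)
  rw [← hk, ← hl]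
  exact (Commute.refl _).pow_pow _ _

namespace Subgroup

theorem mem_normalizer_closure_of_conj_mem {s : Set Γ} {g : Γ}
    (h₁ : ∀ a ∈ s, MulAut.conj g a ∈ s) (h₂ : ∀ a ∈ s, MulAut.conj g⁻¹ a ∈ s) :
    g ∈ normalizer (closure s : Set Γ) := by
  refine normalizer_le_normalizer_closure s (mem_set_normalizer_iff.mpr fun a ↦ ⟨h₁ a, ?_⟩)
  intro ha
  simpa [mul_assoc] using h₂ _ ha

theorem commutator_closure_le_of_commutatorElement_mem {s : Set Γ} {N : Subgroup Γ} [N.Normal]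
    (h : ∀ a ∈ s, ∀ b ∈ s, ⁅a, b⁆ ∈ N) : ⁅closure s, closure s⁆ ≤ N := by
  rw [← QuotientGroup.ker_mk' N, ← map_eq_bot_iff, map_commutator, MonoidHom.map_closure,
    commutator_eq_bot_iff_le_centralizer, centralizer_closure, closure_le]
  rintro _ ⟨a, ha, rfl⟩ _ ⟨b, hb, rfl⟩
  have hab : QuotientGroup.mk' N ⁅b, a⁆ = 1 := (QuotientGroup.eq_one_iff _).mpr (h b hb a ha)
  rw [map_commutatorElement, commutatorElement_eq_one_iff_commute] at hab
  exact hab.eq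

open scoped IsMulCommutative in
def primaryPart (A : Subgroup Γ) [IsMulCommutative A] (p : ℕ) : Subgroup Γ :=
  (CommGroup.primaryComponent A p).map A.subtype

variable {A : Subgroup Γ} [IsMulCommutative A] {p : ℕ}

theorem mem_primaryPart {g : Γ} :
    g ∈ A.primaryPart p ↔ g ∈ A ∧ ∃ k : ℕ, g ^ p ^ k = 1 := by
  simp only [primaryPart, mem_map, CommGroup.mem_primaryComponent, coe_subtype]
  constructor
  · rintro ⟨a, ⟨k, hk⟩, rfl⟩
    exact ⟨a.2, k, by rw [← coe_pow, hk, coe_one]⟩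
  · rintro ⟨hg, k, hk⟩
    exact ⟨⟨g, hg⟩, ⟨k, Subtype.ext hk⟩, rfl⟩

instance normal_primaryPart [A.Normal] : (A.primaryPart p).Normal where
  conj_mem g hg c := by
    obtain ⟨hgA, k, hk⟩ := mem_primaryPart.mp hg
    exact mem_primaryPart.mpr ⟨Normal.conj_mem ‹_› g hgA c, k, by rw [conj_pow, hk]; group⟩

end Subgroup

end GroupLemmas

namespace MikhailovGroup

open Subgroup

variable {p : ℕ}

theorem t_conj_x_pow : MulAut.conj (t p) (x p ^ p) = x p := by
  have h : PresentedGroup.mk (rels p) (cnj X T * (X ^ p)⁻¹) = 1 :=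
    PresentedGroup.one_of_mem (by simp [rels])
  simp only [cnj, map_mul, map_inv, map_pow, mul_inv_eq_one] at h
  have h' : (t p)⁻¹ * x p * t p = x p ^ p := h
  rw [MulAut.conj_apply, ← h']
  group

theorem t_inv_conj_y_pow : MulAut.conj (t p)⁻¹ (y p ^ p) = y p := by
  have h : PresentedGroup.mk (rels p) (cnj Y T⁻¹ * (Y ^ p)⁻¹) = 1 :=
    PresentedGroup.one_of_mem (by simp [rels])
  simp only [cnj, map_mul, map_inv, map_pow, inv_inv, mul_inv_eq_one] at h
  have h' : t p * y p * (t p)⁻¹ = y p ^ p := h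
  rw [MulAut.conj_apply, ← h']
  group

theorem commute_x_y : Commute (x p) (y p) :=
  br_eq_one_iff.mp (PresentedGroup.one_of_mem (by simp [rels]) :
    PresentedGroup.mk (rels p) (br X Y) = 1)

theorem commute_br_x_cnj_y (i j : ℤ) : Commute (br (x p) (cnj (y p ^ j) (t p ^ i))) (x p) := by
  refine br_eq_one_iff.mp ?_
  have h : PresentedGroup.mk (rels p) (br (br X (cnj (Y ^ j) (T ^ i))) X) = 1 :=
    PresentedGroup.one_of_mem (Or.inr (Set.mem_iUnion₂.mpr ⟨i, j, rfl⟩))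
  simp only [br, cnj, map_mul, map_inv, map_zpow] at h
  exact h

/-- `xRoot p a = x^{t^{-a}}`; for `a ≥ 0` it is a `p^a`-th root of `x`. -/
def xRoot (p : ℕ) (a : ℤ) : G p := MulAut.conj (t p ^ a) (x p)

/-- `yRoot p b = y^{t^b}`; for `b ≥ 0` it is a `p^b`-th root of `y`. -/
def yRoot (p : ℕ) (b : ℤ) : G p := MulAut.conj (t p ^ (-b)) (y p)

def xRootConj (p : ℕ) (a b j : ℤ) : G p := MulAut.conj (yRoot p b ^ j) (xRoot p a)

theorem xRoot_zero : xRoot p 0 = x p := by simp [xRoot]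

theorem yRoot_zero : yRoot p 0 = y p := by simp [yRoot]

theorem xRoot_succ_pow (a : ℤ) : xRoot p (a + 1) ^ p = xRoot p a := by
  rw [xRoot, ← map_pow, zpow_add_one, map_mul, MulAut.mul_apply, t_conj_x_pow, xRoot]

theorem yRoot_succ_pow (b : ℤ) : yRoot p (b + 1) ^ p = yRoot p b := by
  rw [yRoot, ← map_pow, neg_add, zpow_add, zpow_neg_one, map_mul, MulAut.mul_apply,
    t_inv_conj_y_pow, yRoot]

theorem conj_t_xRoot (a : ℤ) : MulAut.conj (t p) (xRoot p a) = xRoot p (a + 1) := by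
  rw [xRoot, xRoot, ← MulAut.mul_apply, ← map_mul, ← zpow_one_add, add_comm]

theorem conj_t_yRoot (b : ℤ) : MulAut.conj (t p) (yRoot p b) = yRoot p (b - 1) := by
  rw [yRoot, yRoot, ← MulAut.mul_apply, ← map_mul, ← zpow_one_add]
  congr 3
  ring

theorem conj_t_inv_xRoot (a : ℤ) : MulAut.conj (t p)⁻¹ (xRoot p a) = xRoot p (a - 1) := by
  rw [map_inv, MulAut.inv_apply, MulEquiv.symm_apply_eq, conj_t_xRoot, sub_add_cancel]

theorem conj_t_inv_yRoot (b : ℤ) : MulAut.conj (t p)⁻¹ (yRoot p b) = yRoot p (b + 1) := by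
  rw [map_inv, MulAut.inv_apply, MulEquiv.symm_apply_eq, conj_t_yRoot, add_sub_cancel_right]

theorem commute_xRoot_yRoot_of_add_nonpos {a b : ℤ} (h : a + b ≤ 0) :
    Commute (xRoot p a) (yRoot p b) := by
  obtain ⟨k, hk⟩ := exists_pow_pow_eq_of_pow_succ_eq xRoot_succ_pow (show a ≤ -b by omega)
  rw [← hk]
  exact (commute_x_y.map (MulAut.conj (t p ^ (-b)))).pow_left _

theorem xRootConj_succ_pow (a b j : ℤ) : xRootConj p (a + 1) b j ^ p = xRootConj p a b j := by
  rw [xRootConj, ← map_pow, xRoot_succ_pow, xRootConj]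

theorem xRootConj_succ_mul (a b j : ℤ) : xRootConj p a (b + 1) (p * j) = xRootConj p a b j := by
  rw [xRootConj, zpow_mul, zpow_natCast, yRoot_succ_pow, xRootConj]

theorem exists_xRootConj_eq_of_le (a j : ℤ) {b B : ℤ} (hb : b ≤ B) :
    ∃ J, xRootConj p a B J = xRootConj p a b j := by
  induction B, hb using Int.leInduction with
  | base => exact ⟨j, rfl⟩
  | succ B _ ih =>
    obtain ⟨J, hJ⟩ := ih
    exact ⟨p * J, by rw [xRootConj_succ_mul, hJ]⟩

theorem exists_xRootConj_pow_eq {a b A B : ℤ} (j : ℤ) (ha : a ≤ A) (hb : b ≤ B) :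
    ∃ (J : ℤ) (k : ℕ), xRootConj p A B J ^ p ^ k = xRootConj p a b j := by
  obtain ⟨J, hJ⟩ := exists_xRootConj_eq_of_le a j hb
  obtain ⟨k, hk⟩ :=
    exists_pow_pow_eq_of_pow_succ_eq (u := (xRootConj p · B J)) (xRootConj_succ_pow · B J) ha
  exact ⟨J, k, hk.trans hJ⟩

theorem commute_xRootConj_xRoot (a b j : ℤ) : Commute (xRootConj p a b j) (xRoot p a) := by
  have h : xRootConj p a b j =
      MulAut.conj (t p ^ a) (x p * br (x p) (cnj (y p ^ (-j)) (t p ^ (a + b)))) := by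
    rw [xRootConj, xRoot, yRoot, ← map_zpow]
    simp only [br, cnj, MulAut.conj_apply]
    group
  rw [h, xRoot]
  exact ((Commute.refl _).mul_left (commute_br_x_cnj_y _ _)).map _

theorem commute_xRootConj_of_eq (a b j k : ℤ) :
    Commute (xRootConj p a b j) (xRootConj p a b k) := by
  have h := (commute_xRootConj_xRoot (p := p) a b (j - k)).map (MulAut.conj (yRoot p b ^ k))
  rwa [xRootConj, conj_zpow_conj, add_sub_cancel, ← xRootConj, ← xRootConj] at h

theorem commute_xRootConj (a b j a' b' j' : ℤ) :
    Commute (xRootConj p a b j) (xRootConj p a' b' j') := by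
  obtain ⟨J, k, hk⟩ := exists_xRootConj_pow_eq j (le_max_left a a') (le_max_left b b')
  obtain ⟨J', k', hk'⟩ := exists_xRootConj_pow_eq j' (le_max_right a a') (le_max_right b b')
  rw [← hk, ← hk']
  exact (commute_xRootConj_of_eq _ _ J J').pow_pow _ _

theorem conj_t_xRootConj (a b j : ℤ) :
    MulAut.conj (t p) (xRootConj p a b j) = xRootConj p (a + 1) (b - 1) j := by
  rw [xRootConj, map_conj_apply, map_zpow, conj_t_xRoot, conj_t_yRoot, xRootConj]

theorem conj_t_inv_xRootConj (a b j : ℤ) :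
    MulAut.conj (t p)⁻¹ (xRootConj p a b j) = xRootConj p (a - 1) (b + 1) j := by
  rw [xRootConj, map_conj_apply, map_zpow, conj_t_inv_xRoot, conj_t_inv_yRoot, xRootConj]

theorem conj_yRoot_zpow_xRootConj (a b j n : ℤ) :
    MulAut.conj (yRoot p b ^ n) (xRootConj p a b j) = xRootConj p a b (n + j) :=
  conj_zpow_conj _ _ _ _

def xRootConjs (p : ℕ) : Set (G p) := {g | ∃ a b j, xRootConj p a b j = g}

def xRootConjSubgroup (p : ℕ) : Subgroup (G p) := closure (xRootConjs p)

theorem xRootConj_mem (a b j : ℤ) : xRootConj p a b j ∈ xRootConjSubgroup p :=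
  subset_closure ⟨a, b, j, rfl⟩

theorem xRoot_mem (a : ℤ) : xRoot p a ∈ xRootConjSubgroup p := by
  simpa [xRootConj] using xRootConj_mem (p := p) a 0 0

instance : IsMulCommutative (xRootConjSubgroup p) :=
  isMulCommutative_closure <| by
    rintro _ ⟨a, b, j, rfl⟩ _ ⟨a', b', j', rfl⟩
    exact commute_xRootConj a b j a' b' j'

theorem normal_of_x_y_t_mem_normalizer {N : Subgroup (G p)}
    (hx : x p ∈ normalizer (N : Set (G p))) (hy : y p ∈ normalizer (N : Set (G p)))
    (ht : t p ∈ normalizer (N : Set (G p))) : N.Normal := by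
  rw [← normalizer_eq_top_iff, eq_top_iff']
  refine PresentedGroup.generated_by (rels p) _ fun i ↦ ?_
  fin_cases i
  exacts [hx, hy, ht]

theorem conj_y_zpow_mem_xRootConjs {g : G p} (hg : g ∈ xRootConjs p) (s : ℤ) :
    MulAut.conj (y p ^ s) g ∈ xRootConjs p := by
  obtain ⟨a, b, j, rfl⟩ := hg
  -- lift to a nonnegative `B`, where `y` is the power `y_B ^ p^k`
  obtain ⟨J, hJ⟩ := exists_xRootConj_eq_of_le a j (le_max_left b 0)
  obtain ⟨k, hk⟩ := exists_pow_pow_eq_of_pow_succ_eq yRoot_succ_pow (le_max_right b 0)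
  refine ⟨a, max b 0, s * (p ^ k : ℕ) + J, ?_⟩
  rw [← hJ, ← yRoot_zero, ← hk, ← zpow_natCast, ← zpow_mul, mul_comm,
    conj_yRoot_zpow_xRootConj]

instance : (xRootConjSubgroup p).Normal := by
  refine normal_of_x_y_t_mem_normalizer (le_normalizer (xRoot_zero (p := p) ▸ xRoot_mem 0))
    (mem_normalizer_closure_of_conj_mem ?_ ?_) (mem_normalizer_closure_of_conj_mem ?_ ?_)
  · exact fun g hg ↦ by simpa using conj_y_zpow_mem_xRootConjs hg 1
  · exact fun g hg ↦ by simpa using conj_y_zpow_mem_xRootConjs hg (-1)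
  · rintro _ ⟨a, b, j, rfl⟩
    exact ⟨_, _, _, (conj_t_xRootConj a b j).symm⟩
  · rintro _ ⟨a, b, j, rfl⟩
    exact ⟨_, _, _, (conj_t_inv_xRootConj a b j).symm⟩

theorem commutatorElement_xRoot_yRoot_mem_primaryPart (a b : ℤ) :
    ⁅xRoot p a, yRoot p b⁆ ∈ (xRootConjSubgroup p).primaryPart p := by
  have hA : ⁅xRoot p a, yRoot p b⁆ ∈ xRootConjSubgroup p := by
    have h : ⁅xRoot p a, yRoot p b⁆ = xRootConj p a b 0 * (xRootConj p a b 1)⁻¹ := by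
      simp [xRootConj, commutatorElement_def, mul_assoc]
    rw [h]
    exact mul_mem (xRootConj_mem a b 0) (inv_mem (xRootConj_mem a b 1))
  -- `x_a ^ p^k` is a root `x_m` with `m ≤ -b`, which commutes with `y_b`
  obtain ⟨k, hk⟩ := exists_pow_pow_eq_of_pow_succ_eq xRoot_succ_pow (min_le_left a (-b))
  refine mem_primaryPart.mpr ⟨hA, k, ?_⟩
  rw [← commutatorElement_pow_left_of_commute (setLike_mul_comm hA (xRoot_mem a)), hk,
    commutatorElement_eq_one_iff_commute]
  exact commute_xRoot_yRoot_of_add_nonpos (by omega)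

def rootSubgroup (p : ℕ) : Subgroup (G p) :=
  closure (Set.range (xRoot p) ∪ Set.range (yRoot p))

instance : (rootSubgroup p).Normal := by
  refine normal_of_x_y_t_mem_normalizer
    (le_normalizer (subset_closure (Or.inl ⟨0, xRoot_zero⟩)))
    (le_normalizer (subset_closure (Or.inr ⟨0, yRoot_zero⟩)))
    (mem_normalizer_closure_of_conj_mem ?_ ?_)
  · rintro _ (⟨a, rfl⟩ | ⟨b, rfl⟩)
    · exact Or.inl ⟨a + 1, (conj_t_xRoot a).symm⟩
    · exact Or.inr ⟨b - 1, (conj_t_yRoot b).symm⟩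
  · rintro _ (⟨a, rfl⟩ | ⟨b, rfl⟩)
    · exact Or.inl ⟨a - 1, (conj_t_inv_xRoot a).symm⟩
    · exact Or.inr ⟨b + 1, (conj_t_inv_yRoot b).symm⟩

theorem H_le_rootSubgroup : H p ≤ rootSubgroup p := by
  refine normalClosure_le_normal (Set.insert_subset_iff.mpr ⟨?_, ?_⟩)
  · exact subset_closure (Or.inl ⟨0, xRoot_zero⟩)
  · exact Set.singleton_subset_iff.mpr (subset_closure (Or.inr ⟨0, yRoot_zero⟩))

theorem commutator_rootSubgroup_le :
    ⁅rootSubgroup p, rootSubgroup p⁆ ≤ (xRootConjSubgroup p).primaryPart p := by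
  refine commutator_closure_le_of_commutatorElement_mem ?_
  rintro _ (⟨a, rfl⟩ | ⟨b, rfl⟩) _ (⟨a', rfl⟩ | ⟨b', rfl⟩)
  · rw [commutatorElement_eq_one_iff_commute.mpr (commute_of_pow_succ_eq xRoot_succ_pow a a')]
    exact one_mem _
  · exact commutatorElement_xRoot_yRoot_mem_primaryPart a b'
  · rw [← commutatorElement_inv]
    exact inv_mem (commutatorElement_xRoot_yRoot_mem_primaryPart a' b)
  · rw [commutatorElement_eq_one_iff_commute.mpr (commute_of_pow_succ_eq yRoot_succ_pow b b')]
    exact one_mem _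

end MikhailovGroup

open MikhailovGroup in
theorem mikhailov_derived_H_p_torsion_general (p : ℕ) :
    ∀ g ∈ ⁅H p, H p⁆, ∃ k : ℕ, g ^ p ^ k = 1 := by
  intro g hg
  have hg' : g ∈ (xRootConjSubgroup p).primaryPart p :=
    commutator_rootSubgroup_le (Subgroup.commutator_mono H_le_rootSubgroup H_le_rootSubgroup hg)
  exact (Subgroup.mem_primaryPart.mp hg').2

open MikhailovGroup in
/-- every element of the commutator subgroup `[H,H]` of the normal closure
`H` of `{x,y}` in `G` has order a power of `p`. -/
theorem mikhailov_derived_H_p_torsion (p : ℕ) (hp : p.Prime) :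
    ∀ g ∈ ⁅H p, H p⁆, ∃ k : ℕ, g ^ p ^ k = 1 :=
  mikhailov_derived_H_p_torsion_general p
end
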